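/- Let p be an odd prime. Then Σ_{t ∈ 𝔽_p} φ(1+t) · Σ_{χ} (φχ choose χ)³ · χ̄(1−t²) = (φ(−2)/(p⁴·g(φ))) · Σ_{χ} g(φχ)²·g(χ̄)⁴·g(φχ²)·χ̄(4) − (p−1)·φ(−2)/p³, where both sums over χ run over all complex-valued multiplicative characters of 𝔽_p^× and χ̄ denotes the inverse character of χ. -/

import Mathlib

open Finset

/-!
After exchanging the sums, the substitution `t = 2u - 1` (so `1 + t = 2u` and
`1 - t² = 4u(1 - u)`) turns the sum over `t` into `φ(2) χ̄(4) J(φχ̄, χ̄)`, and the theorem becomes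
a termwise identity for `(φχ choose χ)³ J(φχ̄, χ̄)`. Since `φχ · χ̄ = φ` is nontrivial,
`J(φχ, χ̄) g(φ) = g(φχ) g(χ̄)`; and for `χ ≠ φ`,
`J(φχ̄, χ̄) g(φχ) = χ(-1) g(χ̄) g(φχ²)`. With `g(φ)² = φ(-1) p` this gives the main term.
For `χ = φ` both Jacobi sums are `J(1, φ) = -1`, which produces the correction term.
-/

/-- The quadratic character of `ZMod p`, with values in `ℂ` (vanishing at `0`). -/
noncomputable def Φ (p : ℕ) [Fact p.Prime] : MulChar (ZMod p) ℂ :=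
  (quadraticChar (ZMod p)).ringHomComp (Int.castRingHom ℂ)

/-- The standard additive character `x ↦ e^(2πi x̃ / p)` of `ZMod p`. -/
noncomputable def θ (p : ℕ) (x : ZMod p) : ℂ :=
  Complex.exp (2 * Real.pi * Complex.I * (x.val : ℂ) / p)

/-- The Gauss sum `g(χ) = Σ_x χ(x) θ(x)`. -/
noncomputable def gs (p : ℕ) [Fact p.Prime] (χ : MulChar (ZMod p) ℂ) : ℂ :=
  ∑ x : ZMod p, χ x * θ p x

noncomputable instance (p : ℕ) [Fact p.Prime] : Fintype (MulChar (ZMod p) ℂ) :=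
  Fintype.ofFinite _

/-- The Jacobi sum `J(A,B) = Σ_x A(x) B(1-x)`. -/
noncomputable def J (p : ℕ) [Fact p.Prime] (A B : MulChar (ZMod p) ℂ) : ℂ :=
  ∑ x : ZMod p, A x * B (1 - x)

/-- The binomial `(A choose B) = B(-1) J(A, B̄) / p`. -/
noncomputable def binom (p : ℕ) [Fact p.Prime] (A B : MulChar (ZMod p) ℂ) : ℂ :=
  B (-1) / p * J p A B⁻¹

theorem MulChar.apply_neg_one_sq {R R' : Type*} [CommRing R] [CommRing R'] (χ : MulChar R R') :
    χ (-1) ^ 2 = 1 := by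
  rw [← map_pow, neg_one_sq, map_one]

theorem MulChar.inv_apply_neg_one {R R' : Type*} [CommRing R] [CommRing R'] (χ : MulChar R R') :
    χ⁻¹ (-1) = χ (-1) := by
  rw [MulChar.inv_apply, ← Units.coe_neg_one, Ring.inverse_unit, inv_neg_one]

section GaussJacobi

variable {F R : Type*} [Field F] [Fintype F] [CommRing R] [IsDomain R] {ψ : AddChar F R}

theorem gaussSum_mul_gaussSum_inv {χ : MulChar F R} (hχ : χ ≠ 1) (hψ : ψ.IsPrimitive) :
    gaussSum χ ψ * gaussSum χ⁻¹ ψ = χ (-1) * Fintype.card F := by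
  rw [← mul_gaussSum_inv_eq_gaussSum χ⁻¹, mul_left_comm, gaussSum_mul_gaussSum_eq_card hχ hψ,
    MulChar.inv_apply_neg_one]

theorem jacobiSum_mul_gaussSum_inv (hq : (Fintype.card F : R) ≠ 0) (hψ : ψ.IsPrimitive)
    {A : MulChar F R} (hA : A ≠ 1) (B : MulChar F R) :
    jacobiSum A B * gaussSum A⁻¹ ψ = B (-1) * gaussSum B ψ * gaussSum (A * B)⁻¹ ψ := by
  by_cases hAB : A * B = 1
  · obtain rfl : B = A⁻¹ := eq_inv_of_mul_eq_one_right hAB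
    rw [hAB, inv_one, gaussSum_one_left (by simpa using hψ one_ne_zero),
      jacobiSum_nontrivial_inv hA, MulChar.inv_apply_neg_one]
    ring
  · have hmul := jacobiSum_mul_nontrivial hAB ψ
    have hA' := gaussSum_mul_gaussSum_inv hA hψ
    have hAB' := gaussSum_mul_gaussSum_inv hAB hψ
    rw [MulChar.mul_apply] at hAB'
    have hA1 : A (-1) ≠ 0 := left_ne_zero_of_mul_eq_one (by rw [← sq]; exact A.apply_neg_one_sq)
    have hB1 : B (-1) ≠ 0 := left_ne_zero_of_mul_eq_one (by rw [← sq]; exact B.apply_neg_one_sq)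
    -- multiply `g(AB) J(A, B) = g(A) g(B)` by `g(A⁻¹) g((AB)⁻¹)`
    refine mul_left_cancel₀ (mul_ne_zero (mul_ne_zero hA1 hB1) hq) ?_
    linear_combination (-(jacobiSum A B) * gaussSum A⁻¹ ψ) * hAB' +
      gaussSum (A * B)⁻¹ ψ * gaussSum A⁻¹ ψ * hmul +
      gaussSum B ψ * gaussSum (A * B)⁻¹ ψ * hA' -
      A (-1) * (Fintype.card F : R) * gaussSum B ψ * gaussSum (A * B)⁻¹ ψ * B.apply_neg_one_sq

end GaussJacobi

theorem sum_apply_one_add_mul_apply_one_sub_sq {R R' : Type*} [CommRing R] [Fintype R]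
    [CommRing R'] (h2 : IsUnit (2 : R)) (φ χ : MulChar R R') :
    ∑ t : R, φ (1 + t) * χ (1 - t ^ 2) = φ 2 * χ 4 * jacobiSum (φ * χ) χ := by
  rw [jacobiSum, mul_sum, ← (Equiv.subRight 1).sum_comp,
    ← Equiv.sum_comp (Units.mulLeft h2.unit)]
  refine sum_congr rfl fun u _ ↦ ?_
  simp only [Units.mulLeft_apply, Equiv.subRight_apply, IsUnit.unit_spec, MulChar.mul_apply]
  rw [show 1 + (2 * u - 1) = 2 * u by ring, show 1 - (2 * u - 1) ^ 2 = 4 * (u * (1 - u)) by ring,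
    map_mul, map_mul, map_mul]
  ring

section Quadratic

variable {F R : Type*} [Field F] [Fintype F] [Field R] {φ : MulChar F R} {ψ : AddChar F R}

local notation "q" => (Fintype.card F : R)

theorem binomial_cube_mul_jacobiSum_of_ne (hq : q ≠ 0) (hψ : ψ.IsPrimitive)
    (hφ : φ.IsQuadratic) (hφ1 : φ ≠ 1) {χ : MulChar F R} (hχ : χ ≠ φ) :
    (χ (-1) / q * jacobiSum (φ * χ) χ⁻¹) ^ 3 * jacobiSum (φ * χ⁻¹) χ⁻¹ =
      φ (-1) / (q ^ 4 * gaussSum φ ψ) *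
        (gaussSum (φ * χ) ψ ^ 2 * gaussSum χ⁻¹ ψ ^ 4 * gaussSum (φ * χ ^ 2) ψ) := by
  have hφχ : φ * χ ≠ 1 := fun h ↦ hχ ((eq_inv_of_mul_eq_one_right h).trans hφ.inv)
  have hφχ' : φ * χ⁻¹ ≠ 1 := fun h ↦ hχ (inv_injective (eq_inv_of_mul_eq_one_right h))
  have hJ1 : gaussSum φ ψ * jacobiSum (φ * χ) χ⁻¹ = gaussSum (φ * χ) ψ * gaussSum χ⁻¹ ψ := by
    simpa using jacobiSum_mul_nontrivial (χ := φ * χ) (φ := χ⁻¹) (by rwa [mul_inv_cancel_right]) ψ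
  have hJ2 : jacobiSum (φ * χ⁻¹) χ⁻¹ * gaussSum (φ * χ) ψ =
      χ (-1) * gaussSum χ⁻¹ ψ * gaussSum (φ * χ ^ 2) ψ := by
    have h := jacobiSum_mul_gaussSum_inv hq hψ hφχ' χ⁻¹
    have h1 : (φ * χ⁻¹)⁻¹ = φ * χ := by rw [mul_inv, hφ.inv, inv_inv]
    have h2 : (φ * χ⁻¹ * χ⁻¹)⁻¹ = φ * χ ^ 2 := by
      rw [mul_assoc, ← mul_inv, mul_inv, hφ.inv, inv_inv, sq]
    rw [h1, h2, MulChar.inv_apply_neg_one] at h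
    linear_combination h
  have hf := gaussSum_ne_zero_of_nontrivial hq hφ1 hψ
  have ha := gaussSum_ne_zero_of_nontrivial hq hφχ hψ
  set f := gaussSum φ ψ
  set a := gaussSum (φ * χ) ψ
  set b := gaussSum χ⁻¹ ψ
  set d := gaussSum (φ * χ ^ 2) ψ
  have e1 : jacobiSum (φ * χ) χ⁻¹ = a * b / f := by rw [eq_div_iff hf]; linear_combination hJ1
  have e2 : jacobiSum (φ * χ⁻¹) χ⁻¹ = χ (-1) * b * d / a := by
    rw [eq_div_iff ha]; linear_combination hJ2
  rw [e1, e2]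
  field_simp
  linear_combination b ^ 4 * d * q * (χ (-1) ^ 2 + 1) * χ.apply_neg_one_sq -
    b ^ 4 * d * q * φ.apply_neg_one_sq - b ^ 4 * d * φ (-1) * gaussSum_sq hφ1 hφ hψ

theorem binomial_cube_mul_jacobiSum [DecidableEq (MulChar F R)] (hq : q ≠ 0) (hψ : ψ.IsPrimitive)
    (hφ : φ.IsQuadratic) (hφ1 : φ ≠ 1) (χ : MulChar F R) :
    (χ (-1) / q * jacobiSum (φ * χ) χ⁻¹) ^ 3 * jacobiSum (φ * χ⁻¹) χ⁻¹ =
      φ (-1) / (q ^ 4 * gaussSum φ ψ) *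
          (gaussSum (φ * χ) ψ ^ 2 * gaussSum χ⁻¹ ψ ^ 4 * gaussSum (φ * χ ^ 2) ψ) -
        if χ = φ then (q - 1) * φ (-1) / q ^ 3 else 0 := by
  split_ifs with hχ
  · obtain rfl := hχ
    have hsq : χ * χ = 1 := by rw [← sq, hφ.sq_eq_one]
    rw [hφ.inv, hsq, hφ.sq_eq_one, mul_one, jacobiSum_one_nontrivial hφ1,
      gaussSum_one_left (by simpa using hψ one_ne_zero)]
    have hf := gaussSum_ne_zero_of_nontrivial hq hφ1 hψ
    field_simp
    linear_combination -χ (-1) * (gaussSum χ ψ ^ 2 + χ (-1) * q) * gaussSum_sq hφ1 hφ hψ +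
      χ (-1) * (q - q ^ 2) * χ.apply_neg_one_sq
  · rw [sub_zero]
    exact binomial_cube_mul_jacobiSum_of_ne hq hψ hφ hφ1 hχ

end Quadratic

section ZModChars

variable (p : ℕ) [Fact p.Prime]

theorem Φ_isQuadratic : (Φ p).IsQuadratic :=
  (quadraticChar_isQuadratic (ZMod p)).comp _

variable {p}

theorem Φ_ne_one (hp : p ≠ 2) : Φ p ≠ 1 := by
  rw [Φ, MulChar.ringHomComp_ne_one_iff Int.cast_injective]
  exact quadraticChar_ne_one (by rwa [ZMod.ringChar_zmod_n])

theorem Φ_four (hp : p ≠ 2) : Φ p 4 = 1 := by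
  have h2 : (2 : ZMod p) ≠ 0 := Ring.two_ne_zero (by rwa [ZMod.ringChar_zmod_n])
  simp [Φ, show (4 : ZMod p) = 2 ^ 2 by norm_num, quadraticChar_sq_one' h2]

theorem gs_eq_gaussSum (χ : MulChar (ZMod p) ℂ) : gs p χ = gaussSum χ ZMod.stdAddChar := by
  simp only [gs, gaussSum, θ, ZMod.stdAddChar_apply, ZMod.toCircle_apply]

theorem binom_eq_jacobiSum (A B : MulChar (ZMod p) ℂ) :
    binom p A B = B (-1) / p * jacobiSum A B⁻¹ :=
  rfl

end ZModChars

/-- **Character-sum identity.**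
`Σ_t φ(1+t) Σ_χ (φχ choose χ)³ χ̄(1-t²)
  = (φ(-2)/(p⁴ g(φ))) Σ_χ g(φχ)² g(χ̄)⁴ g(φχ²) χ̄(4) - (p-1)φ(-2)/p³`. -/
theorem character_sum_identity (p : ℕ) [Fact p.Prime] (hp : Odd p) :
    ∑ t : ZMod p, Φ p (1 + t) *
        ∑ χ : MulChar (ZMod p) ℂ, (binom p (Φ p * χ) χ) ^ 3 * χ⁻¹ (1 - t ^ 2) =
      Φ p (-2) / ((p : ℂ) ^ 4 * gs p (Φ p)) *
          ∑ χ : MulChar (ZMod p) ℂ,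
            gs p (Φ p * χ) ^ 2 * gs p χ⁻¹ ^ 4 * gs p (Φ p * χ ^ 2) * χ⁻¹ 4 -
        ((p : ℂ) - 1) * Φ p (-2) / (p : ℂ) ^ 3 := by
  classical
  have hp2 : p ≠ 2 := by rintro rfl; norm_num at hp
  have h2 : IsUnit (2 : ZMod p) := (Ring.two_ne_zero (by rwa [ZMod.ringChar_zmod_n])).isUnit
  have hq : (Fintype.card (ZMod p) : ℂ) ≠ 0 := by
    simpa [ZMod.card] using (Fact.out : p.Prime).ne_zero
  have hterm := binomial_cube_mul_jacobiSum hq (ZMod.isPrimitive_stdAddChar p) (Φ_isQuadratic p)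
    (Φ_ne_one hp2)
  simp only [ZMod.card] at hterm
  have hΦ4 : (Φ p)⁻¹ 4 = 1 := by rw [(Φ_isQuadratic p).inv, Φ_four hp2]
  have hΦ2 : Φ p (-2) = Φ p (-1) * Φ p 2 := by rw [← map_mul]; norm_num
  calc _ = ∑ χ : MulChar (ZMod p) ℂ, Φ p 2 * χ⁻¹ 4 *
        ((χ (-1) / p * jacobiSum (Φ p * χ) χ⁻¹) ^ 3 * jacobiSum (Φ p * χ⁻¹) χ⁻¹) := by
        simp_rw [mul_sum]
        rw [sum_comm]
        refine sum_congr rfl fun χ _ ↦ ?_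
        simp_rw [mul_left_comm (Φ p _)]
        rw [← mul_sum, sum_apply_one_add_mul_apply_one_sub_sq h2, binom_eq_jacobiSum]
        ring
    _ = _ := by
        simp_rw [hterm, gs_eq_gaussSum, mul_sub, sum_sub_distrib, mul_ite, mul_zero, sum_ite_eq',
          mem_univ, if_true, hΦ4, mul_sum]
        rw [hΦ2]
        congr 1
        · exact sum_congr rfl fun _ _ ↦ by ring
        · ring
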